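/- arXiv:2601.04546 — 2 statements merged into one kernel-verified Lean document; each statement's English description precedes it below -/
import Mathlib

section
/- For every n ≥ 1 and every real (or complex) number x, the falling factorial Q_n(2x) satisfies Q_n(2x) = \sum_{k=\lceil n/2 \rceil}^{n} \frac{n! \, 2^{2k-n}}{(n-k)!\,(2k-n)!} \, Q_k(x), where Q_n(x) = x(x-1)(x-2)\cdots(x-n+1). -/
/-!
Since `Q k x * (2 * x - n) = 2 * Q (k + 1) x + (2 * k - n) * Q k x`, multiplying an expansion of
`Q n (2 * x)` in the basis `Q k x` by `2 * x - n` shows that its coefficients satisfy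
`c (n + 1) k = 2 * c n (k - 1) + (2 * k - n) * c n k`. Writing the closed form with `1 / m!`
extended by zero to negative integers `m`, it satisfies this recurrence for all `n` and `k`
at once, because `1 / (m - 1)! = m / m!` holds for every integer `m`.
-/

/-- Falling factorial `Q n x = x (x-1) ⋯ (x-n+1)`. -/
def Q (n : ℕ) (x : ℝ) : ℝ := ∏ i ∈ Finset.range n, (x - i)

open Nat

lemma Q_succ (k : ℕ) (x : ℝ) : Q (k + 1) x = Q k x * (x - k) :=
  Finset.prod_range_succ _ _

lemma Q_mul_two_mul_sub (k n : ℕ) (x : ℝ) :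
    Q k x * (2 * x - n) = 2 * Q (k + 1) x + (2 * k - n) * Q k x := by
  rw [Q_succ]
  ring

section InvFactorial

variable {K : Type*} [Field K]

/-- `1 / m!`, extended by zero to negative `m` (the values of `1 / Γ(m + 1)` at the integers). -/
noncomputable def invFactorial (m : ℤ) : K :=
  if m < 0 then 0 else ((m.toNat)! : K)⁻¹

lemma invFactorial_of_neg {m : ℤ} (hm : m < 0) : (invFactorial m : K) = 0 :=
  if_pos hm

lemma invFactorial_natCast (m : ℕ) : (invFactorial m : K) = ((m ! : ℕ) : K)⁻¹ := by
  simp [invFactorial]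

variable [CharZero K]

lemma invFactorial_sub_one (m : ℤ) : (invFactorial (m - 1) : K) = m * invFactorial m := by
  obtain hm | rfl | ⟨t, rfl⟩ : m < 0 ∨ m = 0 ∨ ∃ t : ℕ, m = t + 1 :=
    (lt_trichotomy m 0).imp_right fun h ↦ h.imp_right fun h ↦ ⟨m.toNat - 1, by omega⟩
  · rw [invFactorial_of_neg hm, invFactorial_of_neg (by omega), mul_zero]
  · simp [invFactorial_of_neg]
  · rw [add_sub_cancel_right, show (t : ℤ) + 1 = (t + 1 : ℕ) by push_cast; rfl,
      invFactorial_natCast, invFactorial_natCast, factorial_succ]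
    push_cast
    field_simp

end InvFactorial

section DuplicationCoeff

variable {K : Type*} [Field K]

/-- The coefficient of `Q k x` in the expansion of `Q n (2 * x)`; it vanishes unless
`n ≤ 2 * k ≤ 2 * n`. -/
noncomputable def duplicationCoeff (n k : ℕ) : K :=
  n ! * 2 ^ (2 * (k : ℤ) - n) * invFactorial (n - k : ℤ) * invFactorial (2 * (k : ℤ) - n)

lemma duplicationCoeff_of_lt {n k : ℕ} (h : n < k) : (duplicationCoeff n k : K) = 0 := by
  rw [duplicationCoeff, invFactorial_of_neg (by omega : (n : ℤ) - k < 0), mul_zero, zero_mul]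

lemma duplicationCoeff_of_two_mul_lt {n k : ℕ} (h : 2 * k < n) :
    (duplicationCoeff n k : K) = 0 := by
  rw [duplicationCoeff, invFactorial_of_neg (by omega : 2 * (k : ℤ) - n < 0), mul_zero]

lemma duplicationCoeff_eq {n k : ℕ} (h₁ : n ≤ 2 * k) (h₂ : k ≤ n) :
    (duplicationCoeff n k : K) = n ! * 2 ^ (2 * k - n) / ((n - k)! * (2 * k - n)!) := by
  rw [duplicationCoeff, show (n : ℤ) - k = (n - k : ℕ) by omega,
    show 2 * (k : ℤ) - n = (2 * k - n : ℕ) by omega, zpow_natCast, invFactorial_natCast,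
    invFactorial_natCast, div_eq_mul_inv, mul_inv, mul_assoc, mul_assoc]

lemma duplicationCoeff_succ_succ [CharZero K] (n k : ℕ) :
    (duplicationCoeff (n + 1) (k + 1) : K) =
      2 * duplicationCoeff n k + (2 * (k + 1 : ℕ) - n : K) * duplicationCoeff n (k + 1) := by
  obtain ⟨a, ha⟩ : ∃ a : ℤ, a = n - k := ⟨_, rfl⟩
  obtain ⟨b, hb⟩ : ∃ b : ℤ, b = 2 * k + 1 - n := ⟨_, rfl⟩
  have hab : (n + 1 : K) = 2 * a + b := by rw [ha, hb]; push_cast; ring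
  have h2k : (2 * (k + 1 : ℕ) - n : K) = b + 1 := by rw [hb]; push_cast; ring
  have hb_succ : (invFactorial b : K) = (b + 1 : ℤ) * invFactorial (b + 1) := by
    rw [← invFactorial_sub_one, add_sub_cancel_right]
  simp only [duplicationCoeff]
  rw [show ((n + 1 : ℕ) : ℤ) - (k + 1 : ℕ) = a by omega,
    show 2 * ((k + 1 : ℕ) : ℤ) - (n + 1 : ℕ) = b by omega,
    show (n : ℤ) - k = a by omega, show 2 * (k : ℤ) - n = b - 1 by omega,
    show (n : ℤ) - (k + 1 : ℕ) = a - 1 by omega, show 2 * ((k + 1 : ℕ) : ℤ) - n = b + 1 by omega,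
    invFactorial_sub_one, invFactorial_sub_one, zpow_sub_one₀ two_ne_zero,
    zpow_add_one₀ two_ne_zero, factorial_succ]
  push_cast at hb_succ h2k ⊢
  linear_combination (n ! * 2 ^ b * invFactorial a * invFactorial b : K) * hab
    + (2 * n ! * 2 ^ b * a * invFactorial a : K) * hb_succ
    - (2 * n ! * 2 ^ b * a * invFactorial a * invFactorial (b + 1) : K) * h2k

end DuplicationCoeff

lemma Q_two_mul_eq_sum_range (n : ℕ) (x : ℝ) :
    Q n (2 * x) = ∑ k ∈ Finset.range (n + 1), duplicationCoeff n k * Q k x := by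
  induction n with
  | zero => simp [duplicationCoeff, Q, invFactorial]
  | succ n ih =>
    set f : ℕ → ℝ := fun k ↦ (2 * k - n) * duplicationCoeff n k * Q k x
    have hf0 : f 0 = 0 := by
      rcases n.eq_zero_or_pos with rfl | hn
      · simp [f]
      · simp [f, duplicationCoeff_of_two_mul_lt (K := ℝ) (by omega : 2 * 0 < n)]
    have hf_shift : ∑ k ∈ Finset.range (n + 1), f (k + 1) = ∑ k ∈ Finset.range (n + 1), f k := by
      have hfn : f (n + 1) = 0 := by simp [f, duplicationCoeff_of_lt (K := ℝ) n.lt_succ_self]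
      rw [← add_zero (∑ k ∈ _, f (k + 1)), ← hf0, ← Finset.sum_range_succ', Finset.sum_range_succ,
        hfn, add_zero]
    calc Q (n + 1) (2 * x)
        = ∑ k ∈ Finset.range (n + 1), (2 * (duplicationCoeff n k * Q (k + 1) x) + f k) := by
          rw [Q_succ, ih, Finset.sum_mul]
          refine Finset.sum_congr rfl fun k _ ↦ ?_
          rw [mul_assoc, Q_mul_two_mul_sub]
          ring
      _ = ∑ k ∈ Finset.range (n + 1), duplicationCoeff (n + 1) (k + 1) * Q (k + 1) x := by
          rw [Finset.sum_add_distrib, ← hf_shift, ← Finset.sum_add_distrib]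
          refine Finset.sum_congr rfl fun k _ ↦ ?_
          rw [duplicationCoeff_succ_succ]
          ring
      _ = ∑ k ∈ Finset.range (n + 2), duplicationCoeff (n + 1) k * Q k x := by
          rw [Finset.sum_range_succ' _ (n + 1), duplicationCoeff_of_two_mul_lt (by omega),
            zero_mul, add_zero]

theorem stmt_0_general (n : ℕ) (x : ℝ) :
    Q n (2 * x) =
      ∑ k ∈ Finset.Icc ((n + 1) / 2) n,
        ((Nat.factorial n : ℝ) * 2 ^ (2 * k - n) /
          ((Nat.factorial (n - k) : ℝ) * (Nat.factorial (2 * k - n) : ℝ))) * Q k x := by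
  have hsub : Finset.Icc ((n + 1) / 2) n ⊆ Finset.range (n + 1) := fun k hk ↦ by
    rw [Finset.mem_Icc] at hk
    rw [Finset.mem_range]
    omega
  rw [Q_two_mul_eq_sum_range, ← Finset.sum_subset hsub]
  · refine Finset.sum_congr rfl fun k hk ↦ ?_
    rw [Finset.mem_Icc] at hk
    rw [duplicationCoeff_eq (by omega) hk.2]
  · intro k _ hk
    rw [Finset.mem_Icc, not_and_or, not_le, not_le] at hk
    rw [hk.elim (fun h ↦ duplicationCoeff_of_two_mul_lt (by omega)) duplicationCoeff_of_lt,
      zero_mul]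

theorem stmt_0 (n : ℕ) (hn : 1 ≤ n) (x : ℝ) :
    Q n (2 * x) =
      ∑ k ∈ Finset.Icc ((n + 1) / 2) n,
        ((Nat.factorial n : ℝ) * 2 ^ (2 * k - n) /
          ((Nat.factorial (n - k) : ℝ) * (Nat.factorial (2 * k - n) : ℝ))) * Q k x :=
  stmt_0_general n x
end

section
/- Let c > 0, d ≥ 0, and let φ ∈ [π/3, π/2]. Then \mathrm{Re}\big[ (c + d e^{i\varphi})^3 / 3 \big] \le \frac{c^3}{3} - \frac{c d^2}{2} + c^2 d. -/
theorem stmt_5 (c d φ : ℝ) (hc : 0 < c) (hd : 0 ≤ d)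
    (hφ : φ ∈ Set.Icc (Real.pi / 3) (Real.pi / 2)) :
    ((((c : ℂ) + (d : ℂ) * Complex.exp ((φ : ℝ) * Complex.I)) ^ 3) / 3).re ≤
      c ^ 3 / 3 - c * d ^ 2 / 2 + c ^ 2 * d := by
  obtain ⟨h1, h2⟩ := hφ
  have hpi := Real.pi_pos
  have hx1 : 0 ≤ Real.cos φ := Real.cos_nonneg_of_mem_Icc ⟨by linarith, h2⟩
  have hx2 : Real.cos φ ≤ 1/2 := by
    rw [show (1:ℝ)/2 = Real.cos (Real.pi/3) by rw [Real.cos_pi_div_three]]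
    exact Real.cos_le_cos_of_nonneg_of_le_pi (by linarith) (by linarith) h1
  have hs : Real.sin φ ^ 2 = 1 - Real.cos φ ^ 2 := by
    have := Real.sin_sq_add_cos_sq φ; linarith
  have hre : ((((c : ℂ) + (d : ℂ) * Complex.exp ((φ : ℝ) * Complex.I)) ^ 3) / 3).re
      = c^3/3 + c^2*d*Real.cos φ + c*d^2*(2*(Real.cos φ)^2 - 1)
        + d^3*(4*(Real.cos φ)^3 - 3*Real.cos φ)/3 := by
    rw [Complex.exp_mul_I]
    simp [Complex.div_re, Complex.normSq, pow_succ, Complex.add_re, Complex.add_im,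
      Complex.mul_re, Complex.mul_im, Complex.cos_ofReal_re, Complex.sin_ofReal_re]
    ring_nf
    linear_combination (-(c*d^2) - d^3*Real.cos φ) * hs
  rw [hre]
  have hcos2 : Real.cos φ ^ 2 ≤ 1/4 := by nlinarith
  have A : 0 ≤ c^2*d*(1 - Real.cos φ) :=
    mul_nonneg (mul_nonneg (sq_nonneg c) hd) (by linarith)
  have B : 0 ≤ c*d^2*(1/4 - Real.cos φ^2) :=
    mul_nonneg (mul_nonneg hc.le (sq_nonneg d)) (by linarith)
  have C : 0 ≤ d^3*(Real.cos φ*(3 - 4*Real.cos φ^2)) :=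
    mul_nonneg (pow_nonneg hd 3) (mul_nonneg hx1 (by linarith))
  linarith
end
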